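/- arXiv:2412.18193 — 4 statements merged into one kernel-verified Lean document; each statement's English description precedes it below -/
import Mathlib

section
/- For every integer n ≥ 2 there is a constant C = C(n) > 0 such that for every integer 1 ≤ k ≤ n−1 and all k-dimensional linear subspaces U, V of ℝⁿ, there exists an orthogonal linear map R : ℝⁿ → ℝⁿ (a surjective linear isometry) with R(U) = V such that ‖b − R(b)‖ ≤ C·‖b‖·‖π_U − π_V‖_op for all b ∈ U. -/
open Set

/-- The orthogonal projection of `ℝⁿ` onto a subspace `U`, as a continuous linear map
`ℝⁿ → ℝⁿ`. -/
noncomputable def projCLM {n : ℕ} (U : Submodule ℝ (EuclideanSpace ℝ (Fin n))) :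
    EuclideanSpace ℝ (Fin n) →L[ℝ] EuclideanSpace ℝ (Fin n) :=
  U.subtypeL.comp (U.orthogonalProjectionOnto)

/-!
Let `ε = ‖π_U - π_V‖`. An orthonormal eigenbasis `(eᵢ)` of the compression of `π_V` to `U` has
the property that the vectors `gᵢ = π_V eᵢ` are pairwise orthogonal and `gⱼ ⟂ eᵢ` for `i ≠ j`.
Since `‖eᵢ - gᵢ‖ ≤ ε`, for `ε < 1` the normalised vectors `fᵢ = gᵢ / ‖gᵢ‖` form an orthonormal
basis of `V` with `‖eᵢ - fᵢ‖ ≤ 2ε`, and the differences `eᵢ - fᵢ` are again pairwise orthogonal.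
By Pythagoras, any isometry of `ℝⁿ` extending `eᵢ ↦ fᵢ` moves each `b ∈ U` by at most `2ε‖b‖`.
For `ε ≥ 1` any isometry carrying `U` onto `V` moves `b` by at most `2‖b‖ ≤ 2ε‖b‖`.
So `C = 2` works, independently of `n`.
-/

open Module RealInnerProductSpace

variable {E F : Type*} [NormedAddCommGroup E] [InnerProductSpace ℝ E]
  [NormedAddCommGroup F] [InnerProductSpace ℝ F]

theorem norm_sub_normalize_le {e : F} (he : ‖e‖ = 1) (g : F) :
    ‖e - NormedSpace.normalize g‖ ≤ 2 * ‖e - g‖ := by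
  have hnorm : ‖g - NormedSpace.normalize g‖ ≤ |‖g‖ - 1| := by
    rcases eq_or_ne g 0 with rfl | hg
    · simp
    · have : g - NormedSpace.normalize g = (1 - ‖g‖⁻¹) • g := by
        rw [sub_smul, one_smul, NormedSpace.normalize]
      rw [this, norm_smul, Real.norm_eq_abs, ← abs_norm g, ← abs_mul, abs_norm, sub_mul,
        inv_mul_cancel₀ (norm_ne_zero_iff.2 hg), one_mul]
  calc ‖e - NormedSpace.normalize g‖ ≤ ‖e - g‖ + ‖g - NormedSpace.normalize g‖ :=
        norm_sub_le_norm_sub_add_norm_sub _ _ _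
    _ ≤ ‖e - g‖ + |‖g‖ - ‖e‖| := by rw [he]; gcongr
    _ ≤ 2 * ‖e - g‖ := by
      rw [norm_sub_rev e g]; linarith [abs_norm_sub_norm_le g e]

theorem orthonormal_normalize {ι : Type*} {v : ι → E} (hv : ∀ i, v i ≠ 0)
    (h : Pairwise fun i j => ⟪v i, v j⟫ = 0) :
    Orthonormal ℝ fun i => NormedSpace.normalize (v i) :=
  ⟨fun i => NormedSpace.norm_normalize_eq_one_iff.2 (hv i), fun i j hij => by
    simp only [NormedSpace.normalize, real_inner_smul_left, real_inner_smul_right, h hij, mul_zero]⟩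

theorem pairwise_inner_sub_normalize_eq_zero {ι : Type*} {e g : ι → E} (he : Orthonormal ℝ e)
    (hg : Pairwise fun i j => ⟪g i, g j⟫ = 0) (heg : Pairwise fun i j => ⟪e i, g j⟫ = 0) :
    Pairwise fun i j =>
      ⟪e i - NormedSpace.normalize (g i), e j - NormedSpace.normalize (g j)⟫ = 0 := by
  intro i j hij
  simp only [inner_sub_left, inner_sub_right, NormedSpace.normalize, real_inner_smul_left,
    real_inner_smul_right, real_inner_comm (e j), he.2 hij.symm, hg hij, heg hij, heg hij.symm]
  ring

theorem OrthonormalBasis.norm_apply_le_of_pairwise_orthogonal {ι : Type*} [Fintype ι]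
    (e : OrthonormalBasis ι ℝ E) (T : E →ₗ[ℝ] F)
    (hT : Pairwise fun i j => ⟪T (e i), T (e j)⟫ = 0) {D : ℝ} (hD₀ : 0 ≤ D)
    (hD : ∀ i, ‖T (e i)‖ ≤ D) (x : E) : ‖T x‖ ≤ D * ‖x‖ := by
  have hTx : T x = ∑ i, ⟪e i, x⟫ • T (e i) := by
    conv_lhs => rw [← e.sum_repr' x]
    simp only [map_sum, map_smul]
  have hsq : ‖T x‖ ^ 2 = ∑ i, ⟪e i, x⟫ ^ 2 * ‖T (e i)‖ ^ 2 := by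
    rw [← real_inner_self_eq_norm_sq, hTx, sum_inner]
    refine Finset.sum_congr rfl fun i _ => ?_
    rw [inner_sum, Finset.sum_eq_single i (fun j _ hji => by
        rw [real_inner_smul_left, real_inner_smul_right, hT hji.symm, mul_zero, mul_zero])
      (by simp), real_inner_smul_left, real_inner_smul_right, real_inner_self_eq_norm_sq]
    ring
  have hx : ‖x‖ ^ 2 = ∑ i, ⟪e i, x⟫ ^ 2 := by
    rw [← e.sum_sq_norm_inner_right x]
    simp only [Real.norm_eq_abs, sq_abs]
  refine (pow_le_pow_iff_left₀ (norm_nonneg _) (by positivity) two_ne_zero).1 ?_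
  rw [mul_pow, hx, hsq, Finset.mul_sum]
  refine Finset.sum_le_sum fun i _ => ?_
  rw [mul_comm (D ^ 2)]
  exact mul_le_mul_of_nonneg_left (pow_le_pow_left₀ (norm_nonneg _) (hD i) 2) (sq_nonneg _)

variable [FiniteDimensional ℝ E]

theorem Submodule.exists_orthonormalBasis_inner_starProjection_eq_zero
    (U V : Submodule ℝ E) :
    ∃ e : OrthonormalBasis (Fin (finrank ℝ U)) ℝ U,
      Pairwise fun i j => ⟪(e i : E), V.starProjection (e j)⟫ = 0 := by
  set S : U →L[ℝ] U := U.subtypeL.adjoint ∘L V.starProjection ∘L U.subtypeL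
  have hS : (S : U →ₗ[ℝ] U).IsSymmetric :=
    ((isSelfAdjoint_starProjection V).adjoint_conj U.subtypeL).isSymmetric
  refine ⟨hS.eigenvectorBasis rfl, fun i j hij => ?_⟩
  have h := congrArg (⟪hS.eigenvectorBasis rfl i, ·⟫) (hS.apply_eigenvectorBasis rfl j)
  simp only [ContinuousLinearMap.coe_coe, S, ContinuousLinearMap.comp_apply,
    RCLike.ofReal_real_eq_id, id, real_inner_smul_right,
    (hS.eigenvectorBasis rfl).orthonormal.2 hij, mul_zero] at h
  rwa [ContinuousLinearMap.adjoint_inner_right] at h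

theorem Submodule.exists_linearIsometryEquiv_map_eq {U V : Submodule ℝ E}
    (hUV : finrank ℝ U = finrank ℝ V) {ι : Type*} [Fintype ι] (e : OrthonormalBasis ι ℝ U)
    {f : ι → E} (hf : Orthonormal ℝ f) (hfV : ∀ i, f i ∈ V) :
    ∃ R : E ≃ₗᵢ[ℝ] E, U.map R.toLinearEquiv.toLinearMap = V ∧ ∀ i, R (e i) = f i := by
  set L : U →ₗᵢ[ℝ] E := (e.toBasis.constr ℝ f).isometryOfOrthonormal e.orthonormal
    (by rwa [← funext (e.toBasis.constr_basis ℝ f)] at hf)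
  set R : E ≃ₗᵢ[ℝ] E := L.extend.toLinearIsometryEquiv rfl
  have hR : ∀ x : U, R x = L x := L.extend_apply
  refine ⟨R, Submodule.eq_of_le_of_finrank_eq ?_ ?_, fun i => by
    rw [hR, ← e.coe_toBasis]; exact e.toBasis.constr_basis ℝ f i⟩
  · rintro _ ⟨x, hx, rfl⟩
    have : L ⟨x, hx⟩ ∈ Submodule.span ℝ (Set.range f) := by
      rw [← Basis.constr_range (b := e.toBasis) (S := ℝ)]
      exact LinearMap.mem_range_self _ _
    exact Submodule.span_le.2 (Set.range_subset_iff.2 hfV) (hR ⟨x, hx⟩ ▸ this)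
  · rw [LinearEquiv.finrank_map_eq, hUV]

theorem Submodule.exists_linearIsometryEquiv_map_eq_of_finrank_eq {U V : Submodule ℝ E}
    (hUV : finrank ℝ U = finrank ℝ V) :
    ∃ R : E ≃ₗᵢ[ℝ] E, U.map R.toLinearEquiv.toLinearMap = V :=
  let ⟨R, hRV, _⟩ := Submodule.exists_linearIsometryEquiv_map_eq hUV
    ((stdOrthonormalBasis ℝ U).reindex (finCongr hUV))
    ((stdOrthonormalBasis ℝ V).orthonormal.comp_linearIsometry V.subtypeₗᵢ)
    (fun i => (stdOrthonormalBasis ℝ V i).2)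
  ⟨R, hRV⟩

theorem Submodule.exists_linearIsometryEquiv_map_eq_of_norm_sub_lt_one {U V : Submodule ℝ E}
    (hUV : finrank ℝ U = finrank ℝ V) (h : ‖U.starProjection - V.starProjection‖ < 1) :
    ∃ R : E ≃ₗᵢ[ℝ] E, U.map R.toLinearEquiv.toLinearMap = V ∧
      ∀ b ∈ U, ‖b - R b‖ ≤ 2 * ‖U.starProjection - V.starProjection‖ * ‖b‖ := by
  set ε := ‖U.starProjection - V.starProjection‖
  obtain ⟨e, heg⟩ := U.exists_orthonormalBasis_inner_starProjection_eq_zero V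
  set g := fun i => V.starProjection (e i)
  have he : Orthonormal ℝ fun i => (e i : E) := e.orthonormal.comp_linearIsometry U.subtypeₗᵢ
  have hge : ∀ i, ‖(e i : E) - g i‖ ≤ ε := fun i =>
    calc ‖(e i : E) - g i‖ = ‖(U.starProjection - V.starProjection) (e i)‖ := by
          rw [sub_apply, U.starProjection_eq_self_iff.2 (e i).2]
      _ ≤ ε * ‖(e i : E)‖ := ContinuousLinearMap.le_opNorm _ _
      _ = ε := by rw [he.1 i, mul_one]
  have hg : ∀ i, g i ≠ 0 := fun i hgi => by
    have := hge i
    rw [hgi, sub_zero, he.1 i] at this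
    linarith
  have hgg : Pairwise fun i j => ⟪g i, g j⟫ = 0 := fun i j hij => by
    change ⟪V.starProjection (e i), V.starProjection (e j)⟫ = 0
    rw [V.inner_starProjection_left_eq_right, V.starProjection_eq_self_iff.2
      (V.starProjection_apply_mem _)]
    exact heg hij
  obtain ⟨R, hRV, hRe⟩ := Submodule.exists_linearIsometryEquiv_map_eq hUV e
    (orthonormal_normalize hg hgg) (fun i => V.smul_mem _ (V.starProjection_apply_mem _))
  refine ⟨R, hRV, fun b hb => ?_⟩
  set T : U →ₗ[ℝ] E := (LinearMap.id - R.toLinearEquiv.toLinearMap) ∘ₗ U.subtype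
  have hTe : ∀ i, T (e i) = e i - NormedSpace.normalize (g i) := fun i => by
    simp [T, hRe]
  have hT : Pairwise fun i j => ⟪T (e i), T (e j)⟫ = 0 := by
    simpa only [hTe] using pairwise_inner_sub_normalize_eq_zero he hgg heg
  have hTε : ∀ i, ‖T (e i)‖ ≤ 2 * ε := fun i => by
    rw [hTe]
    exact (norm_sub_normalize_le (he.1 i) (g i)).trans (by linarith [hge i])
  exact e.norm_apply_le_of_pairwise_orthogonal T hT (by positivity) hTε ⟨b, hb⟩

theorem exists_rotation_of_subspaces_general
    (n : ℕ) :
    ∃ C : ℝ, 0 < C ∧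
      ∀ k : ℕ, 1 ≤ k → k ≤ n - 1 →
        ∀ U V : Submodule ℝ (EuclideanSpace ℝ (Fin n)),
          Module.finrank ℝ U = k → Module.finrank ℝ V = k →
          ∃ R : EuclideanSpace ℝ (Fin n) ≃ₗᵢ[ℝ] EuclideanSpace ℝ (Fin n),
            U.map R.toLinearEquiv.toLinearMap = V ∧
            ∀ b ∈ U, ‖b - R b‖ ≤ C * ‖b‖ * ‖projCLM U - projCLM V‖ := by
  refine ⟨2, two_pos, fun k _ _ U V hU hV => ?_⟩
  have hUV : finrank ℝ U = finrank ℝ V := hU.trans hV.symm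
  change ∃ R : EuclideanSpace ℝ (Fin n) ≃ₗᵢ[ℝ] EuclideanSpace ℝ (Fin n), _ ∧
    ∀ b ∈ U, ‖b - R b‖ ≤ 2 * ‖b‖ * ‖U.starProjection - V.starProjection‖
  by_cases hε : ‖U.starProjection - V.starProjection‖ < 1
  · obtain ⟨R, hRV, hR⟩ := U.exists_linearIsometryEquiv_map_eq_of_norm_sub_lt_one hUV hε
    exact ⟨R, hRV, fun b hb => (hR b hb).trans_eq (by ring)⟩
  · obtain ⟨R, hRV⟩ := U.exists_linearIsometryEquiv_map_eq_of_finrank_eq hUV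
    refine ⟨R, hRV, fun b _ => ?_⟩
    calc ‖b - R b‖ ≤ ‖b‖ + ‖R b‖ := norm_sub_le _ _
      _ = 2 * ‖b‖ * 1 := by rw [R.norm_map]; ring
      _ ≤ 2 * ‖b‖ * ‖U.starProjection - V.starProjection‖ := by gcongr; exact not_lt.1 hε

/-- **Lemma 2.4.** For every `n ≥ 2` there is a constant `C = C(n) > 0` such that for every
`1 ≤ k ≤ n - 1` and all `k`-dimensional subspaces `U, V` of `ℝⁿ` there is an orthogonal
linear map `R : ℝⁿ → ℝⁿ` (a surjective linear isometry) with `R(U) = V` and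
`‖b - R(b)‖ ≤ C·‖b‖·‖π_U - π_V‖` for all `b ∈ U`. -/
theorem exists_rotation_of_subspaces
    (n : ℕ) (hn : 2 ≤ n) :
    ∃ C : ℝ, 0 < C ∧
      ∀ k : ℕ, 1 ≤ k → k ≤ n - 1 →
        ∀ U V : Submodule ℝ (EuclideanSpace ℝ (Fin n)),
          Module.finrank ℝ U = k → Module.finrank ℝ V = k →
          ∃ R : EuclideanSpace ℝ (Fin n) ≃ₗᵢ[ℝ] EuclideanSpace ℝ (Fin n),
            U.map R.toLinearEquiv.toLinearMap = V ∧
            ∀ b ∈ U, ‖b - R b‖ ≤ C * ‖b‖ * ‖projCLM U - projCLM V‖ :=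
  exists_rotation_of_subspaces_general n
end

section
/- Let n, k, k' be integers with 1 ≤ k' < k ≤ n−1, let U and V be k-dimensional linear subspaces of ℝⁿ, let C > 0, and let R : ℝⁿ → ℝⁿ be an orthogonal linear map with R(U) = V satisfying ‖x − R(x)‖ ≤ C·‖x‖·‖π_U − π_V‖_op for all x ∈ ℝⁿ. Let r > 0, let a ∈ U^⊥, let X₀ ⊆ U be a k'-dimensional linear subspace, and let b ∈ U ∩ X₀^⊥ with ‖b‖ ≤ r (equivalently, the affine flat X = X₀ + b meets the closed ball B(0,r)). Then there is a constant C' > 0 depending only on n and C such that ‖π_{X₀} − π_{R(X₀)}‖_op + ‖(b + a) − (R(b) + a − π_{R(X₀)}(a))‖ ≤ C'·(r + ‖a‖ + 1)·‖π_U − π_V‖_op; that is, d_𝒜(R(X) + a, X + a) ≤ C'·(r + ‖a‖ + 1)·‖π_U − π_V‖_op, where X + a is identified with the pair (π_{X₀}, b + a) and R(X) + a with the pair (π_{R(X₀)}, R(b) + a − π_{R(X₀)}(a)). -/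
open Set

/-!
If `‖x - R x‖ ≤ δ‖x‖`, then `π_{R K} = R π_K R⁻¹` differs from `π_K` by at most `2δ`: write
`π_K x - R π_K R⁻¹ x = π_K (x - R⁻¹ x) + (y - R y)` with `y = π_K R⁻¹ x`. For `a ⊥ K` this
bounds `‖π_{R K} a‖ = ‖(π_K - π_{R K}) a‖` by `2δ‖a‖`, and the translation part of
`d_𝒜(R(X) + a, X + a)` is `‖(b - R b) + π_{R X₀} a‖ ≤ δ‖b‖ + 2δ‖a‖` with `δ = C‖π_U - π_V‖`.
-/

theorem projCLM_eq_starProjection {n : ℕ} (U : Submodule ℝ (EuclideanSpace ℝ (Fin n))) :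
    projCLM U = U.starProjection :=
  rfl

section RotatedProjection

variable {𝕜 E : Type*} [RCLike 𝕜] [NormedAddCommGroup E] [InnerProductSpace 𝕜 E]
  (K : Submodule 𝕜 E) [K.HasOrthogonalProjection] {R : E ≃ₗᵢ[𝕜] E} {δ : ℝ}

theorem norm_starProjection_sub_starProjection_map_le (hR : ∀ x, ‖x - R x‖ ≤ δ * ‖x‖)
    (hδ : 0 ≤ δ) :
    ‖K.starProjection - (K.map (R.toLinearEquiv : E →ₗ[𝕜] E)).starProjection‖ ≤ 2 * δ := by
  refine ContinuousLinearMap.opNorm_le_bound _ (by positivity) fun x => ?_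
  obtain ⟨y, rfl⟩ : ∃ y, x = R y := ⟨R.symm x, (R.apply_symm_apply x).symm⟩
  have hy : ‖R y‖ = ‖y‖ := R.norm_map y
  have hPy : ‖K.starProjection y - R (K.starProjection y)‖ ≤ δ * ‖y‖ :=
    (hR _).trans (by gcongr; exact K.norm_starProjection_apply_le y)
  calc ‖(K.starProjection - (K.map (R.toLinearEquiv : E →ₗ[𝕜] E)).starProjection) (R y)‖
      = ‖K.starProjection (R y - y) + (K.starProjection y - R (K.starProjection y))‖ := by
        rw [sub_apply, Submodule.starProjection_map_apply,
          LinearIsometryEquiv.symm_apply_apply, map_sub, sub_add_sub_cancel]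
    _ ≤ δ * ‖y‖ + δ * ‖y‖ := by
        refine norm_add_le_of_le ((K.norm_starProjection_apply_le _).trans ?_) hPy
        simpa [norm_sub_rev] using hR y
    _ = 2 * δ * ‖R y‖ := by rw [hy]; ring

theorem norm_starProjection_map_apply_le_of_mem_orthogonal
    (hR : ∀ x, ‖x - R x‖ ≤ δ * ‖x‖) (hδ : 0 ≤ δ) {a : E} (ha : a ∈ Kᗮ) :
    ‖(K.map (R.toLinearEquiv : E →ₗ[𝕜] E)).starProjection a‖ ≤ 2 * δ * ‖a‖ := by
  have h := (K.starProjection - (K.map (R.toLinearEquiv : E →ₗ[𝕜] E)).starProjection).le_opNorm a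
  rw [sub_apply, K.starProjection_apply_eq_zero_iff.mpr ha, zero_sub, norm_neg] at h
  exact h.trans (by gcongr; exact norm_starProjection_sub_starProjection_map_le K hR hδ)

end RotatedProjection

/-- **Lemma 2.5.** There is a constant `C' > 0`, depending only on `n` and `C`, with the
following property. Let `1 ≤ k' < k ≤ n - 1`, let `U, V` be `k`-dimensional subspaces of
`ℝⁿ`, and let `R` be an orthogonal map with `R(U) = V` and
`‖x - R(x)‖ ≤ C·‖x‖·‖π_U - π_V‖` for all `x`. Let `r > 0`, `a ∈ U^⊥`, let `X₀ ⊆ U` be a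
`k'`-dimensional subspace and `b ∈ U ∩ X₀^⊥` with `‖b‖ ≤ r`. Then, for the affine flat
`X = X₀ + b`, identifying `X + a` with `(π_{X₀}, b + a)` and `R(X) + a` with
`(π_{R(X₀)}, R(b) + a - π_{R(X₀)}(a))`, one has
`d_𝒜(R(X) + a, X + a) ≤ C'·(r + ‖a‖ + 1)·‖π_U - π_V‖`. -/
theorem dist_rotated_subflat
    (n : ℕ) (C : ℝ) (hC : 0 < C) :
    ∃ C' : ℝ, 0 < C' ∧
      ∀ k k' : ℕ, 1 ≤ k' → k' < k → k ≤ n - 1 →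
        ∀ U V : Submodule ℝ (EuclideanSpace ℝ (Fin n)),
          Module.finrank ℝ U = k → Module.finrank ℝ V = k →
          ∀ R : EuclideanSpace ℝ (Fin n) ≃ₗᵢ[ℝ] EuclideanSpace ℝ (Fin n),
            U.map (R.toLinearEquiv : EuclideanSpace ℝ (Fin n) →ₗ[ℝ] EuclideanSpace ℝ (Fin n)) = V →
            (∀ x : EuclideanSpace ℝ (Fin n),
              ‖x - R x‖ ≤ C * ‖x‖ * ‖projCLM U - projCLM V‖) →
            ∀ r : ℝ, 0 < r →
              ∀ a ∈ Uᗮ,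
                ∀ X₀ : Submodule ℝ (EuclideanSpace ℝ (Fin n)), X₀ ≤ U →
                  Module.finrank ℝ X₀ = k' →
                  ∀ b ∈ U ⊓ X₀ᗮ, ‖b‖ ≤ r →
                    ‖projCLM X₀ - projCLM (X₀.map (R.toLinearEquiv : EuclideanSpace ℝ (Fin n) →ₗ[ℝ] EuclideanSpace ℝ (Fin n)))‖ +
                        ‖(b + a) - (R b + a - projCLM (X₀.map (R.toLinearEquiv : EuclideanSpace ℝ (Fin n) →ₗ[ℝ] EuclideanSpace ℝ (Fin n))) a)‖
                      ≤ C' * (r + ‖a‖ + 1) * ‖projCLM U - projCLM V‖ := by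
  refine ⟨2 * C, by positivity, ?_⟩
  intro k k' _ _ _ U V _ _ R _ hR r _ a ha X₀ hX₀U _ b _ hbr
  set ε := ‖projCLM U - projCLM V‖
  have hR' : ∀ x, ‖x - R x‖ ≤ C * ε * ‖x‖ := fun x => (hR x).trans_eq (by ring)
  have hδ : 0 ≤ C * ε := by positivity
  have hproj := norm_starProjection_sub_starProjection_map_le X₀ hR' hδ
  have ha' := norm_starProjection_map_apply_le_of_mem_orthogonal X₀ hR' hδ
    (Submodule.orthogonal_le hX₀U ha)
  have hb : ‖b - R b‖ ≤ C * ε * r := (hR' b).trans (by gcongr)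
  have hr : 0 ≤ C * ε * r := mul_nonneg hδ ((norm_nonneg b).trans hbr)
  rw [projCLM_eq_starProjection, projCLM_eq_starProjection,
    show ∀ y, b + a - (R b + a - y) = (b - R b) + y from fun y => by abel]
  calc _ ≤ 2 * (C * ε) + (C * ε * r + 2 * (C * ε) * ‖a‖) :=
        add_le_add hproj (norm_add_le_of_le hb ha')
    _ ≤ 2 * C * (r + ‖a‖ + 1) * ε := by linarith
end

section
/- Let n ≥ 2 and 1 ≤ k ≤ n−1 be integers, let s ∈ (0,k] and t ∈ (0, k(n−k)] be reals, and let F ⊆ ℝⁿ be an (s,t;k)-spread Furstenberg set. Then for every ε > 0 with ε < min{s, t} there exists i ∈ ℕ such that the bounded Borel set F ∩ B(0,i) (where B(0,i) is the closed ball of radius i about the origin) is an (s−ε, t−ε; k)-spread Furstenberg set. -/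
/-!
Countable stability of Hausdorff dimension, applied twice. Each slice `F ∩ (P + a_P)` is the
increasing union of its truncations to the balls `B(0,i)`, so some truncation has dimension
`> s - ε`; this sorts the planes into countably many classes `Q i`. Their projections cover the
projections of all planes, so some class `Q i` still has dimension `> t - ε`, and `F ∩ B(0,i)` is
spread Furstenberg for it.
-/

open Set MeasureTheory

/-- `F ⊆ ℝⁿ` is an `(s,t;k)`-spread Furstenberg set. -/
def IsSpreadFurstenberg (n k : ℕ) (s t : ℝ)
    (F : Set (EuclideanSpace ℝ (Fin n))) : Prop :=
  MeasurableSet F ∧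
  ∃ 𝔓 : Set (Submodule ℝ (EuclideanSpace ℝ (Fin n))),
    𝔓.Nonempty ∧
    (∀ P ∈ 𝔓, Module.finrank ℝ P = k) ∧
    ENNReal.ofReal t ≤ dimH (projCLM '' 𝔓) ∧
    ∀ P ∈ 𝔓, ∃ a : EuclideanSpace ℝ (Fin n),
      ENNReal.ofReal s ≤ dimH (F ∩ ((· + a) '' (P : Set (EuclideanSpace ℝ (Fin n)))))

open scoped ENNReal

theorem exists_lt_dimH_of_subset_iUnion {X ι : Type*} [EMetricSpace X] [Countable ι]
    {s : Set X} {u : ι → Set X} {d : ℝ≥0∞} (hsu : s ⊆ ⋃ i, u i) (hd : d < dimH s) :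
    ∃ i, d < dimH (u i) :=
  lt_iSup_iff.mp (hd.trans_le ((dimH_mono hsu).trans_eq (dimH_iUnion u)))

theorem exists_lt_dimH_inter_closedBall {X : Type*} [MetricSpace X] (x : X) {s : Set X}
    {d : ℝ≥0∞} (hd : d < dimH s) : ∃ i : ℕ, d < dimH (s ∩ Metric.closedBall x i) :=
  exists_lt_dimH_of_subset_iUnion (by rw [← inter_iUnion, Metric.iUnion_closedBall_nat, inter_univ])
    hd

theorem isSpreadFurstenberg_of_lt_dimH {n k : ℕ} {s t : ℝ} {F : Set (EuclideanSpace ℝ (Fin n))}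
    (𝔓 : Set (Submodule ℝ (EuclideanSpace ℝ (Fin n)))) (hF : MeasurableSet F)
    (hrank : ∀ P ∈ 𝔓, Module.finrank ℝ P = k) (ht : ENNReal.ofReal t < dimH (projCLM '' 𝔓))
    (hslices : ∀ P ∈ 𝔓, ∃ a : EuclideanSpace ℝ (Fin n),
      ENNReal.ofReal s ≤ dimH (F ∩ ((· + a) '' (P : Set (EuclideanSpace ℝ (Fin n)))))) :
    IsSpreadFurstenberg n k s t F := by
  have hne : (projCLM '' 𝔓).Nonempty :=
    nonempty_iff_ne_empty.2 fun h => by simp [h] at ht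
  exact ⟨hF, 𝔓, hne.of_image, hrank, ht.le, hslices⟩

theorem spread_furstenberg_bounded_reduction_general
    (n k : ℕ)
    (s t : ℝ)
    (F : Set (EuclideanSpace ℝ (Fin n)))
    (hF : IsSpreadFurstenberg n k s t F) :
    ∀ ε : ℝ, 0 < ε → ε < min s t →
      ∃ i : ℕ, IsSpreadFurstenberg n k (s - ε) (t - ε)
        (F ∩ Metric.closedBall (0 : EuclideanSpace ℝ (Fin n)) (i : ℝ)) := by
  intro ε hε hεlt
  obtain ⟨hεs, hεt⟩ := lt_min_iff.mp hεlt
  have hlower {r : ℝ} (hr : ε < r) : ENNReal.ofReal (r - ε) < ENNReal.ofReal r :=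
    ENNReal.ofReal_lt_ofReal_iff'.2 ⟨by linarith, by linarith⟩
  obtain ⟨hFmeas, 𝔓, -, hrank, hdimt, hslices⟩ := hF
  set Q : ℕ → Set (Submodule ℝ (EuclideanSpace ℝ (Fin n))) := fun i =>
    {P ∈ 𝔓 | ∃ a : EuclideanSpace ℝ (Fin n), ENNReal.ofReal (s - ε) ≤
      dimH ((F ∩ Metric.closedBall 0 i) ∩ ((· + a) '' (P : Set (EuclideanSpace ℝ (Fin n)))))}
  have hcover : 𝔓 ⊆ ⋃ i, Q i := by
    intro P hP
    obtain ⟨a, ha⟩ := hslices P hP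
    obtain ⟨i, hi⟩ := exists_lt_dimH_inter_closedBall 0 ((hlower hεs).trans_le ha)
    exact mem_iUnion.2 ⟨i, hP, a, by rw [inter_right_comm]; exact hi.le⟩
  obtain ⟨i, hi⟩ := exists_lt_dimH_of_subset_iUnion
    ((image_mono hcover).trans (image_iUnion (f := projCLM) (s := Q)).le)
    ((hlower hεt).trans_le hdimt)
  exact ⟨i, isSpreadFurstenberg_of_lt_dimH (Q i) (hFmeas.inter measurableSet_closedBall)
    (fun P hP => hrank P hP.1) hi (fun P hP => hP.2)⟩

/-- **Reduction to bounded sets.** If `F ⊆ ℝⁿ` is an `(s,t;k)`-spread Furstenberg set, then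
for every `0 < ε < min{s,t}` there exists `i ∈ ℕ` such that the bounded Borel set
`F ∩ B(0,i)` is an `(s-ε, t-ε; k)`-spread Furstenberg set. -/
theorem spread_furstenberg_bounded_reduction
    (n k : ℕ) (hn : 2 ≤ n) (hk₁ : 1 ≤ k) (hk₂ : k + 1 ≤ n)
    (s t : ℝ) (hs₁ : 0 < s) (hs₂ : s ≤ k)
    (ht₁ : 0 < t) (ht₂ : t ≤ (k : ℝ) * ((n : ℝ) - k))
    (F : Set (EuclideanSpace ℝ (Fin n)))
    (hF : IsSpreadFurstenberg n k s t F) :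
    ∀ ε : ℝ, 0 < ε → ε < min s t →
      ∃ i : ℕ, IsSpreadFurstenberg n k (s - ε) (t - ε)
        (F ∩ Metric.closedBall (0 : EuclideanSpace ℝ (Fin n)) (i : ℝ)) :=
  spread_furstenberg_bounded_reduction_general n k s t F hF
end

section
/- Let n ≥ 4 be an integer and let s be a real number with 1 < s and ⌈s⌉ ≤ n−2. Let H ⊆ ℝⁿ be a linear subspace of dimension ⌈s⌉ and let X ⊆ H be a Borel set with dim_H X = s. Then the family 𝒫 of all (n−1)-dimensional linear subspaces of ℝⁿ containing H satisfies dim_H{π_P : P ∈ 𝒫} = n − 1 − ⌈s⌉ (in the operator-norm metric), and consequently X is an (s, n−1−⌈s⌉; n−1)-spread Furstenberg set whose Hausdorff dimension equals s = 1 + s − (n−1−t)/⌈s⌉ with t = n−1−⌈s⌉; i.e., the lower bound for (s,t;n−1)-spread Furstenberg sets is attained. -/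
open Set MeasureTheory

/-!
Hyperplanes containing `H` are the `v^⊥` with `v ∈ H^⊥ \ {0}`, and
`v ↦ π_{v^⊥} = 1 - ‖v‖⁻² v ⊗ v` is smooth away from `0` and invariant under scaling. Normalising
`v` to `e + w`, with `e` a vector of an orthonormal basis of `H^⊥` and `w ∈ H^⊥ ∩ e^⊥`, covers
`{π_P : P ∈ 𝔓}` by finitely many smooth images of `(d - 1)`-dimensional subspaces,
`d = n - ⌈s⌉`, which bounds its dimension from above. Each of these charts has the smooth left
inverse `T ↦ ⟪e, e - T e⟫⁻¹ • (e - T e) - e`, which gives the matching lower bound. Since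
`X ⊆ H` lies in every `P ∈ 𝔓`, `X` is itself the required Furstenberg set.
-/

open Module
open scoped RealInnerProductSpace

theorem dimH_le_dimH_image_of_leftInvOn {E F : Type*} [NormedAddCommGroup E] [NormedSpace ℝ E]
    [NormedAddCommGroup F] [NormedSpace ℝ F] [FiniteDimensional ℝ F] {f : E → F} {g : F → E}
    {s : Set E} {t : Set F} (hg : ContDiffOn ℝ 1 g t) (ht : Convex ℝ t) (hf : MapsTo f s t)
    (hgf : LeftInvOn g f s) : dimH s ≤ dimH (f '' s) :=
  calc dimH s = dimH (g '' (f '' s)) := by rw [hgf.image_image]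
    _ ≤ dimH (f '' s) := hg.dimH_image_le ht hf.image_subset

theorem dimH_coe_submodule {E : Type*} [NormedAddCommGroup E] [NormedSpace ℝ E]
    [FiniteDimensional ℝ E] (V : Submodule ℝ E) : dimH (V : Set E) = finrank ℝ V := by
  have hV : Isometry (Subtype.val : V → E) := fun _ _ => rfl
  rw [← Real.dimH_univ_eq_finrank, ← hV.dimH_image, image_univ, Subtype.range_coe]

variable {E : Type*} [NormedAddCommGroup E] [InnerProductSpace ℝ E]

theorem starProjection_orthogonal_span_singleton_eq (v : E) :
    (ℝ ∙ v)ᗮ.starProjection = 1 - (‖v‖ ^ 2)⁻¹ • (innerSL ℝ v).smulRight v := by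
  ext x
  simp [Submodule.starProjection_orthogonal', Submodule.starProjection_singleton, div_eq_inv_mul,
    mul_smul]

theorem contDiffOn_starProjection_orthogonal_span_singleton {k : WithTop ℕ∞} :
    ContDiffOn ℝ k (fun v : E => (ℝ ∙ v)ᗮ.starProjection) {0}ᶜ := by
  simp_rw [starProjection_orthogonal_span_singleton_eq]
  have hrank_one : ContDiff ℝ k (fun v : E => (innerSL ℝ v).smulRight v) :=
    (ContinuousLinearMap.smulRightL ℝ E E).isBoundedBilinearMap.contDiff.comp
      ((innerSL ℝ).contDiff.prodMk contDiff_id)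
  refine contDiffOn_const.sub (ContDiffOn.fun_smul ?_ hrank_one.contDiffOn)
  exact (contDiff_norm_sq ℝ).contDiffOn.inv fun v hv => by simpa using hv

section UnitVector

variable {e w : E} (he : ‖e‖ = 1) (hw : ⟪e, w⟫ = 0)
include he hw

theorem inner_add_eq_one : ⟪e, e + w⟫ = 1 := by
  rw [inner_add_right, real_inner_self_eq_norm_sq, he, hw]
  norm_num

theorem add_ne_zero_of_inner_eq_zero : e + w ≠ 0 := fun h => by
  simpa [h] using inner_add_eq_one he hw

theorem sub_starProjection_orthogonal_span_add :
    e - (ℝ ∙ (e + w))ᗮ.starProjection e = (‖e + w‖ ^ 2)⁻¹ • (e + w) := by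
  simp [starProjection_orthogonal_span_singleton_eq, he, real_inner_comm e w, hw]

theorem inner_sub_starProjection_orthogonal_span_add :
    ⟪e, e - (ℝ ∙ (e + w))ᗮ.starProjection e⟫ = (‖e + w‖ ^ 2)⁻¹ := by
  rw [sub_starProjection_orthogonal_span_add he hw, real_inner_smul_right, inner_add_eq_one he hw,
    mul_one]

end UnitVector

section Chart

variable {e : E} (he : ‖e‖ = 1) {s : Set E} (hs : ∀ w ∈ s, ⟪e, w⟫ = 0)
include he hs

theorem dimH_image_starProjection_orthogonal_span_add_le [FiniteDimensional ℝ E]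
    (hconv : Convex ℝ s) :
    dimH ((fun w => (ℝ ∙ (e + w))ᗮ.starProjection) '' s) ≤ dimH s :=
  (contDiffOn_starProjection_orthogonal_span_singleton.comp
    (contDiff_const.add contDiff_id).contDiffOn
    fun w hw => add_ne_zero_of_inner_eq_zero he (hs w hw)).dimH_image_le hconv Subset.rfl

theorem dimH_le_dimH_image_starProjection_orthogonal_span_add [FiniteDimensional ℝ E] :
    dimH s ≤ dimH ((fun w => (ℝ ∙ (e + w))ᗮ.starProjection) '' s) := by
  -- `e + w` is read off `e - T e`, a multiple of it normalized by its inner product with `e`.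
  set g : (E →L[ℝ] E) → E := fun T => ⟪e, e - T e⟫⁻¹ • (e - T e) - e
  have hsub : ContDiff ℝ 1 (fun T : E →L[ℝ] E => e - T e) :=
    contDiff_const.sub (ContinuousLinearMap.apply ℝ E e).contDiff
  have hinner : ∀ T : E →L[ℝ] E, ⟪e, e - T e⟫ = 1 - ⟪e, T e⟫ := fun T => by
    rw [inner_sub_right, real_inner_self_eq_norm_sq, he, one_pow]
  refine dimH_le_dimH_image_of_leftInvOn (g := g) (t := {T | ⟪e, T e⟫ < 1}) ?_ ?_ ?_ ?_
  · refine (ContDiffOn.fun_smul ?_ hsub.contDiffOn).sub contDiffOn_const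
    refine ((innerSL ℝ e).contDiff.comp hsub).contDiffOn.inv fun T hT => ?_
    simp only [Function.comp_apply, innerSL_apply_apply, hinner]
    exact sub_ne_zero.mpr (ne_of_lt hT).symm
  · exact convex_halfSpace_lt ((innerSL ℝ e).comp (ContinuousLinearMap.apply ℝ E e)).isLinear 1
  · intro w hw
    have hpos : 0 < (‖e + w‖ ^ 2)⁻¹ := by
      have := add_ne_zero_of_inner_eq_zero he (hs w hw)
      positivity
    have := hinner ((ℝ ∙ (e + w))ᗮ.starProjection)
    rw [inner_sub_starProjection_orthogonal_span_add he (hs w hw)] at this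
    exact show ⟪e, _⟫ < 1 by linarith
  · intro w hw
    have hne : ‖e + w‖ ^ 2 ≠ 0 := by
      have := add_ne_zero_of_inner_eq_zero he (hs w hw)
      positivity
    simp only [g]
    rw [inner_sub_starProjection_orthogonal_span_add he (hs w hw),
      sub_starProjection_orthogonal_span_add he (hs w hw), inv_inv, smul_smul,
      mul_inv_cancel₀ hne, one_smul, add_sub_cancel_left]

end Chart

theorem dimH_image_starProjection_orthogonal_span_add [FiniteDimensional ℝ E] {e : E}
    (he : ‖e‖ = 1) {V : Submodule ℝ E} (hV : V ≤ (ℝ ∙ e)ᗮ) :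
    dimH ((fun w => (ℝ ∙ (e + w))ᗮ.starProjection) '' V) = finrank ℝ V := by
  have hVe : ∀ w ∈ (V : Set E), ⟪e, w⟫ = 0 := fun w hw =>
    Submodule.mem_orthogonal_singleton_iff_inner_right.mp (hV hw)
  rw [← dimH_coe_submodule V]
  exact le_antisymm (dimH_image_starProjection_orthogonal_span_add_le he hVe V.convex)
    (dimH_le_dimH_image_starProjection_orthogonal_span_add he hVe)

theorem setOf_hyperplane_le_eq_image [FiniteDimensional ℝ E] {H : Submodule ℝ E} (hH : H ≠ ⊤) :
    {P : Submodule ℝ E | finrank ℝ P = finrank ℝ E - 1 ∧ H ≤ P} =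
      (fun v => (ℝ ∙ v)ᗮ) '' ((Hᗮ : Set E) \ {0}) := by
  ext P
  constructor
  · rintro ⟨hP, hHP⟩
    have hPH : finrank ℝ Pᗮ = 1 := by
      have := Submodule.finrank_add_finrank_orthogonal P
      have := Submodule.finrank_lt hH
      omega
    obtain ⟨v, hvP, hv0⟩ := Submodule.exists_mem_ne_zero_of_ne_bot
      (Submodule.one_le_finrank_iff.mp hPH.ge)
    refine ⟨v, ⟨Submodule.orthogonal_le hHP hvP, hv0⟩, ?_⟩
    dsimp only
    rw [← eq_span_singleton_of_mem_of_finrank_eq_one hPH hvP hv0,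
      Submodule.orthogonal_orthogonal]
  · rintro ⟨v, ⟨hvH, hv0⟩, rfl⟩
    refine ⟨?_, (Submodule.le_orthogonal_orthogonal H).trans
      (Submodule.orthogonal_le ((Submodule.span_singleton_le_iff_mem v _).mpr hvH))⟩
    have := Submodule.finrank_add_finrank_orthogonal (ℝ ∙ v)
    rw [finrank_span_singleton hv0] at this
    dsimp only
    omega

theorem image_orthogonal_span_singleton_eq_iUnion {K : Submodule ℝ E} {ι : Type*} [Fintype ι]
    (b : OrthonormalBasis ι ℝ K) :
    (fun v => (ℝ ∙ v)ᗮ) '' ((K : Set E) \ {0}) =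
      ⋃ i, (fun w => (ℝ ∙ ((b i : E) + w))ᗮ) '' ((ℝ ∙ (b i : E))ᗮ ⊓ K : Submodule ℝ E) := by
  have hb : ∀ i, ‖(b i : E)‖ = 1 := fun i => b.orthonormal.1 i
  apply Subset.antisymm
  · rintro - ⟨v, ⟨hvK, hv0⟩, rfl⟩
    obtain ⟨i, hi⟩ : ∃ i, ⟪(b i : E), v⟫ ≠ 0 := by
      by_contra! h
      have := b.sum_repr' ⟨v, hvK⟩
      simp only [Submodule.coe_inner, h, zero_smul, Finset.sum_const_zero] at this
      exact hv0 (congrArg Subtype.val this.symm)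
    set w := ⟪(b i : E), v⟫⁻¹ • v - b i
    have hw : w ∈ (ℝ ∙ (b i : E))ᗮ := by
      rw [Submodule.mem_orthogonal_singleton_iff_inner_right, inner_sub_right,
        real_inner_smul_right, inv_mul_cancel₀ hi, real_inner_self_eq_norm_sq, hb i]
      norm_num
    refine mem_iUnion.mpr ⟨i, w, ⟨hw, K.sub_mem (K.smul_mem _ hvK) (b i).2⟩, ?_⟩
    simp only [w, add_sub_cancel,
      Submodule.span_singleton_smul_eq (isUnit_iff_ne_zero.mpr (inv_ne_zero hi))]
  · refine iUnion_subset fun i => ?_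
    rintro - ⟨w, ⟨hw, hwK⟩, rfl⟩
    exact ⟨_, ⟨K.add_mem (b i).2 hwK, add_ne_zero_of_inner_eq_zero (hb i)
      (Submodule.mem_orthogonal_singleton_iff_inner_right.mp hw)⟩, rfl⟩

theorem dimH_image_starProjection_setOf_hyperplane_le [FiniteDimensional ℝ E]
    {H : Submodule ℝ E} (hH : H ≠ ⊤) :
    dimH ((fun P : Submodule ℝ E => P.starProjection) ''
        {P | finrank ℝ P = finrank ℝ E - 1 ∧ H ≤ P}) = (finrank ℝ Hᗮ - 1 : ℕ) := by
  set b := stdOrthonormalBasis ℝ Hᗮ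
  have hb : ∀ i, ‖(b i : E)‖ = 1 := fun i => b.orthonormal.1 i
  have hd : 0 < finrank ℝ Hᗮ :=
    Submodule.one_le_finrank_iff.mpr (mt Submodule.orthogonal_eq_bot_iff.mp hH)
  have : Nonempty (Fin (finrank ℝ Hᗮ)) := ⟨⟨0, hd⟩⟩
  rw [setOf_hyperplane_le_eq_image hH, image_orthogonal_span_singleton_eq_iUnion b, image_iUnion,
    dimH_iUnion]
  refine (iSup_congr fun i => ?_).trans iSup_const
  rw [image_image, dimH_image_starProjection_orthogonal_span_add (hb i) inf_le_left,
    Submodule.finrank_add_inf_finrank_orthogonal' (n := finrank ℝ Hᗮ - 1)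
      ((Submodule.span_singleton_le_iff_mem _ _).mpr (b i).2)
      (by rw [finrank_span_singleton (by simp [← norm_ne_zero_iff])]; omega)]

theorem dimH_image_projCLM_setOf_hyperplane_le {n : ℕ} {H : Submodule ℝ (EuclideanSpace ℝ (Fin n))}
    (hH : finrank ℝ H < n) :
    dimH (projCLM '' {P : Submodule ℝ (EuclideanSpace ℝ (Fin n)) | finrank ℝ P = n - 1 ∧ H ≤ P}) =
      ENNReal.ofReal (n - 1 - finrank ℝ H) := by
  have hH_ne_top : H ≠ ⊤ := fun h => hH.ne (by rw [h, finrank_top, finrank_euclideanSpace_fin])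
  have hperp : finrank ℝ Hᗮ - 1 = n - 1 - finrank ℝ H := by
    have := Submodule.finrank_add_finrank_orthogonal H
    rw [finrank_euclideanSpace_fin] at this
    omega
  have := dimH_image_starProjection_setOf_hyperplane_le hH_ne_top
  rw [finrank_euclideanSpace_fin, hperp] at this
  rw [← Nat.cast_one (R := ℝ), ← Nat.cast_sub (by omega), ← Nat.cast_sub (by omega),
    ENNReal.ofReal_natCast]
  exact this

theorem sharp_example_hyperplanes_general
    (n : ℕ)
    (s : ℝ) (hs₁ : 1 < s) (hs₂ : (⌈s⌉ : ℤ) ≤ (n : ℤ) - 2)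
    (H : Submodule ℝ (EuclideanSpace ℝ (Fin n)))
    (hH : Module.finrank ℝ H = (⌈s⌉ : ℤ).toNat)
    (X : Set (EuclideanSpace ℝ (Fin n))) (hXmeas : MeasurableSet X)
    (hXH : X ⊆ (H : Set (EuclideanSpace ℝ (Fin n))))
    (hXdim : dimH X = ENNReal.ofReal s) :
    dimH (projCLM '' {P : Submodule ℝ (EuclideanSpace ℝ (Fin n)) |
        Module.finrank ℝ P = n - 1 ∧ H ≤ P})
      = ENNReal.ofReal ((n : ℝ) - 1 - (⌈s⌉ : ℝ)) ∧
    IsSpreadFurstenberg n (n - 1) s ((n : ℝ) - 1 - (⌈s⌉ : ℝ)) X ∧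
    dimH X = ENNReal.ofReal
      (1 + s - ((n : ℝ) - 1 - ((n : ℝ) - 1 - (⌈s⌉ : ℝ))) / (⌈s⌉ : ℝ)) := by
  have hceil : (1 : ℤ) < ⌈s⌉ := Int.lt_ceil.mpr (by exact_mod_cast hs₁)
  obtain ⟨m, hm⟩ : ∃ m : ℕ, ⌈s⌉ = m := ⟨_, (Int.toNat_of_nonneg (by omega)).symm⟩
  rw [hm, Int.toNat_natCast] at hH
  rw [show (⌈s⌉ : ℝ) = m by exact_mod_cast hm]
  have hdim := dimH_image_projCLM_setOf_hyperplane_le (H := H) (by omega)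
  rw [hH] at hdim
  refine ⟨hdim, ⟨hXmeas, _, ?_, fun P hP => hP.1, hdim.ge, fun P hP => ⟨0, ?_⟩⟩, ?_⟩
  · refine nonempty_iff_ne_empty.mpr fun h => ?_
    rw [h, image_empty, dimH_empty, eq_comm, ENNReal.ofReal_eq_zero] at hdim
    have : (m : ℝ) + 2 ≤ n := by exact_mod_cast (show m + 2 ≤ n by omega)
    linarith
  · simpa [inter_eq_self_of_subset_left (hXH.trans hP.2)] using hXdim.ge
  · have hm0 : (m : ℝ) ≠ 0 := by exact_mod_cast (show m ≠ 0 by omega)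
    rw [hXdim, sub_sub_cancel, div_self hm0, add_sub_cancel_left]

/-- **Sharp example for hyperplanes (end of Section 4).** Let `n ≥ 4`, `1 < s`,
`⌈s⌉ ≤ n - 2`, let `H ⊆ ℝⁿ` be a linear subspace of dimension `⌈s⌉`, and let `X ⊆ H` be a
Borel set with `dim_H X = s`. Then the family `𝔓` of all `(n-1)`-dimensional linear
subspaces containing `H` satisfies `dim_H {π_P : P ∈ 𝔓} = n - 1 - ⌈s⌉`, hence `X` is an
`(s, n-1-⌈s⌉; n-1)`-spread Furstenberg set whose Hausdorff dimension equals
`s = 1 + s - (n-1-t)/⌈s⌉` with `t = n - 1 - ⌈s⌉`. -/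
theorem sharp_example_hyperplanes
    (n : ℕ) (hn : 4 ≤ n)
    (s : ℝ) (hs₁ : 1 < s) (hs₂ : (⌈s⌉ : ℤ) ≤ (n : ℤ) - 2)
    (H : Submodule ℝ (EuclideanSpace ℝ (Fin n)))
    (hH : Module.finrank ℝ H = (⌈s⌉ : ℤ).toNat)
    (X : Set (EuclideanSpace ℝ (Fin n))) (hXmeas : MeasurableSet X)
    (hXH : X ⊆ (H : Set (EuclideanSpace ℝ (Fin n))))
    (hXdim : dimH X = ENNReal.ofReal s) :
    dimH (projCLM '' {P : Submodule ℝ (EuclideanSpace ℝ (Fin n)) |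
        Module.finrank ℝ P = n - 1 ∧ H ≤ P})
      = ENNReal.ofReal ((n : ℝ) - 1 - (⌈s⌉ : ℝ)) ∧
    IsSpreadFurstenberg n (n - 1) s ((n : ℝ) - 1 - (⌈s⌉ : ℝ)) X ∧
    dimH X = ENNReal.ofReal
      (1 + s - ((n : ℝ) - 1 - ((n : ℝ) - 1 - (⌈s⌉ : ℝ))) / (⌈s⌉ : ℝ)) :=
  sharp_example_hyperplanes_general n s hs₁ hs₂ H hH X hXmeas hXH hXdim
end
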